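/- Let j be a positive integer and h, k integers, and let p be a prime dividing j but dividing neither h nor k. Then the rational number ∑_{i=0}^{p−1} C(j+p−1, i) h^{j+p−1−i} S(j+p−1−i, j) k^i B_i has denominator divisible by p (it is not p-integral). -/
import Mathlib

/-- Stirling numbers of the second kind. -/
def stirling2 : ℕ → ℕ → ℕ
  | 0, 0 => 1
  | 0, _ + 1 => 0
  | _ + 1, 0 => 0
  | n + 1, j + 1 => (j + 1) * stirling2 n (j + 1) + stirling2 n j

lemma stirling2_eq_zero : ∀ {n k : ℕ}, n < k → stirling2 n k = 0
  | 0, _+1, _ => rfl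
  | n+1, k+1, h => by
    rw [stirling2, stirling2_eq_zero (by omega), stirling2_eq_zero (by omega)]
    simp

lemma stirling2_self : ∀ n, stirling2 n n = 1
  | 0 => rfl
  | n+1 => by
    rw [stirling2, stirling2_eq_zero (Nat.lt_succ_self n), stirling2_self n]
    simp

lemma padicNorm_mul_le_one {p : ℕ} [Fact p.Prime] {a b : ℚ}
    (ha : padicNorm p a ≤ 1) (hb : padicNorm p b ≤ 1) : padicNorm p (a * b) ≤ 1 := by
  rw [padicNorm.mul]
  exact mul_le_one₀ ha (padicNorm.nonneg _) hb

lemma bernoulli_rec (n : ℕ) (hn : n ≠ 0) :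
    bernoulli n =
      -(∑ k ∈ Finset.range n, ((n + 1).choose k : ℚ) * bernoulli k) / ((n + 1 : ℕ) : ℚ) := by
  have h := sum_bernoulli (n + 1)
  rw [Finset.sum_range_succ, if_neg (by omega), Nat.choose_succ_self_right] at h
  have hne : ((n + 1 : ℕ) : ℚ) ≠ 0 := by positivity
  rw [eq_div_iff hne]
  linear_combination h

lemma bernoulli_padicNorm_le (p : ℕ) [hp : Fact p.Prime] :
    ∀ n, n + 1 < p → padicNorm p (bernoulli n) ≤ 1 := by
  intro n
  induction n using Nat.strong_induction_on with
  | _ n ih =>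
    intro hn
    rcases Nat.eq_zero_or_pos n with rfl | hn0
    · simp [padicNorm.one]
    · rw [bernoulli_rec n hn0.ne', padicNorm.div, padicNorm.neg]
      have h1 : padicNorm p ((n + 1 : ℕ) : ℚ) = 1 := by
        rw [padicNorm.nat_eq_one_iff]
        intro hd
        have := Nat.le_of_dvd (by omega) hd
        omega
      rw [h1, div_one]
      refine padicNorm.sum_le' (fun k hk => ?_) zero_le_one
      simp only [Finset.mem_range] at hk
      exact padicNorm_mul_le_one (padicNorm.of_nat _) (ih k hk (by omega))

lemma bernoulli_pred_padicNorm (p : ℕ) [hp : Fact p.Prime] :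
    padicNorm p (bernoulli (p - 1)) = p := by
  have hp2 : 2 ≤ p := hp.out.two_le
  obtain ⟨m, hm⟩ : ∃ m, p = m + 1 := ⟨p - 1, by omega⟩
  have hm1 : 1 ≤ m := by omega
  have h := sum_bernoulli p
  rw [if_neg (by omega)] at h
  rw [show p = m + 1 from hm, Finset.sum_range_succ, Nat.choose_succ_self_right] at h
  -- h : ∑ k in range m, C(p,k) * B k + (m+1) * B m = 0
  set S : ℚ := ∑ k ∈ Finset.range m, (((m + 1).choose k : ℕ) : ℚ) * bernoulli k with hS
  have hSnorm : padicNorm p S = 1 := by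
    obtain ⟨m', hm'⟩ : ∃ m', m = m' + 1 := ⟨m - 1, by omega⟩
    rw [hS, hm', Finset.sum_range_succ']
    have hR : padicNorm p (∑ i ∈ Finset.range m',
        (((m' + 1 + 1).choose (i + 1) : ℕ) : ℚ) * bernoulli (i + 1)) < 1 := by
      refine padicNorm.sum_lt' (fun i hi => ?_) one_pos
      simp only [Finset.mem_range] at hi
      have hc : padicNorm p (((m' + 1 + 1).choose (i + 1) : ℕ) : ℚ) < 1 := by
        rw [padicNorm.nat_lt_one_iff]
        rw [show m' + 1 + 1 = p from by omega]
        exact hp.out.dvd_choose_self (by omega) (by omega)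
      have hb : padicNorm p (bernoulli (i + 1)) ≤ 1 :=
        bernoulli_padicNorm_le p (i + 1) (by omega)
      calc padicNorm p ((((m' + 1 + 1).choose (i + 1) : ℕ) : ℚ) * bernoulli (i + 1))
          = padicNorm p (((m' + 1 + 1).choose (i + 1) : ℕ) : ℚ) *
              padicNorm p (bernoulli (i + 1)) := padicNorm.mul _ _
        _ ≤ padicNorm p (((m' + 1 + 1).choose (i + 1) : ℕ) : ℚ) * 1 := by
              exact mul_le_mul_of_nonneg_left hb (padicNorm.nonneg _)
        _ < 1 := by rwa [mul_one]
    have h0 : (((m' + 1 + 1).choose 0 : ℕ) : ℚ) * bernoulli 0 = 1 := by simp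
    rw [h0, padicNorm.add_eq_max_of_ne (by rw [padicNorm.one]; exact ne_of_lt hR)]
    rw [padicNorm.one, max_eq_right (le_of_lt hR)]
  -- from h : S + (m+1) * B m = 0
  have hpb : ((p : ℕ) : ℚ) * bernoulli m = -S := by
    rw [hm]; linear_combination h
  have hnorm : padicNorm p (((p : ℕ) : ℚ) * bernoulli m) = 1 := by
    rw [hpb, padicNorm.neg, hSnorm]
  rw [padicNorm.mul, padicNorm.padicNorm_p_of_prime] at hnorm
  have hppos : (0 : ℚ) < (p : ℚ) := by exact_mod_cast hp.out.pos
  have : padicNorm p (bernoulli m) = p := by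
    field_simp at hnorm
    linarith
  rw [show p - 1 = m from by omega]
  exact this

/-- If `p` is a prime dividing `j` but neither `h` nor `k`, then the coefficient
`∑_{i=0}^{p-1} C(j+p-1,i) h^{j+p-1-i} S(j+p-1-i,j) k^i B_i` is not `p`-integral. -/
theorem not_p_integral (j : ℕ) (hj : 0 < j) (h k : ℤ) (p : ℕ) (hp : p.Prime)
    (hpj : p ∣ j) (hph : ¬ (p : ℤ) ∣ h) (hpk : ¬ (p : ℤ) ∣ k) :
    p ∣ (∑ i ∈ Finset.range p,
      ((j + p - 1).choose i : ℚ) * (h : ℚ) ^ (j + p - 1 - i) *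
        (stirling2 (j + p - 1 - i) j : ℚ) * (k : ℚ) ^ i * bernoulli i).den := by
  haveI : Fact p.Prime := ⟨hp⟩
  have hp2 : 2 ≤ p := hp.two_le
  obtain ⟨m, hm⟩ := hpj
  have hm1 : 1 ≤ m := by nlinarith [hj, hm]
  set N := j + p - 1 with hN
  set f : ℕ → ℚ := fun i =>
    ((N.choose i : ℕ) : ℚ) * (h : ℚ) ^ (N - i) * (stirling2 (N - i) j : ℕ) *
      (k : ℚ) ^ i * bernoulli i with hf
  -- Lucas: p does not divide C(N, p-1)
  have hlucas : ¬ p ∣ N.choose (p - 1) := by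
    intro hdvd
    have h1 : N.choose (p - 1) ≡
        (N % p).choose ((p - 1) % p) * (N / p).choose ((p - 1) / p) [MOD p] :=
      Choose.choose_modEq_choose_mod_mul_choose_div_nat
    have hNe : N = (p - 1) + p * m := by omega
    have hmod : N % p = p - 1 := by
      rw [hNe, Nat.add_mul_mod_self_left, Nat.mod_eq_of_lt (by omega)]
    have hdiv : N / p = m := by
      rw [hNe, Nat.add_mul_div_left _ _ (by omega : 0 < p), Nat.div_eq_of_lt (by omega)]
      omega
    rw [hmod, hdiv, Nat.mod_eq_of_lt (by omega), Nat.div_eq_of_lt (by omega),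
      Nat.choose_self, Nat.choose_zero_right, mul_one] at h1
    have h2 : (0 : ℕ) ≡ 1 [MOD p] :=
      ((Nat.modEq_zero_iff_dvd.mpr hdvd).symm.trans h1)
    have := (Nat.modEq_iff_dvd' (by omega)).mp h2
    have := Nat.le_of_dvd (by omega) this
    omega
  -- norms
  have hNsub : N - (p - 1) = j := by omega
  have hT : padicNorm p (f (p - 1)) = p := by
    have hcast : ((N.choose (p - 1) : ℕ) : ℚ) * (h : ℚ) ^ (N - (p - 1)) *
        (stirling2 (N - (p - 1)) j : ℕ) * (k : ℚ) ^ (p - 1) =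
        (((N.choose (p - 1) : ℤ) * h ^ j * (stirling2 j j : ℤ) * k ^ (p - 1) : ℤ) : ℚ) := by
      rw [hNsub]; push_cast; ring
    have hc : ¬ (p : ℤ) ∣ (N.choose (p - 1) : ℤ) * h ^ j * (stirling2 j j : ℤ) * k ^ (p - 1) := by
      intro hd
      have hpz : Prime (p : ℤ) := Nat.prime_iff_prime_int.1 hp
      rcases hpz.dvd_mul.mp hd with hd | hd
      · rcases hpz.dvd_mul.mp hd with hd | hd
        · rcases hpz.dvd_mul.mp hd with hd | hd
          · exact hlucas (Int.natCast_dvd_natCast.mp hd)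
          · exact hph (hpz.dvd_of_dvd_pow hd)
        · rw [stirling2_self] at hd
          have h1 : (p : ℤ) ∣ 1 := by simpa using hd
          have h2 : (p : ℤ) = 1 := Int.eq_one_of_dvd_one (by positivity) h1
          have : p = 1 := by exact_mod_cast h2
          omega
      · exact hpk (hpz.dvd_of_dvd_pow hd)
    have : f (p - 1) = (((N.choose (p - 1) : ℤ) * h ^ j * (stirling2 j j : ℤ) *
        k ^ (p - 1) : ℤ) : ℚ) * bernoulli (p - 1) := by
      rw [hf]; dsimp only; rw [hcast]
    rw [this, padicNorm.mul, padicNorm.int_eq_one_iff _ |>.mpr hc, one_mul,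
      bernoulli_pred_padicNorm]
  have hA : padicNorm p (∑ i ∈ Finset.range (p - 1), f i) ≤ 1 := by
    refine padicNorm.sum_le' (fun i hi => ?_) zero_le_one
    simp only [Finset.mem_range] at hi
    have hb : padicNorm p (bernoulli i) ≤ 1 := bernoulli_padicNorm_le p i (by omega)
    refine padicNorm_mul_le_one (padicNorm_mul_le_one (padicNorm_mul_le_one
      (padicNorm_mul_le_one (padicNorm.of_nat _) ?_) (padicNorm.of_nat _)) ?_) hb
    · rw [show ((h : ℚ) ^ (N - i)) = (((h ^ (N - i) : ℤ)) : ℚ) by push_cast; ring]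
      exact padicNorm.of_int _
    · rw [show ((k : ℚ) ^ i) = (((k ^ i : ℤ)) : ℚ) by push_cast; ring]
      exact padicNorm.of_int _
  have hsplit : (∑ i ∈ Finset.range p, f i) =
      (∑ i ∈ Finset.range (p - 1), f i) + f (p - 1) := by
    conv_lhs => rw [show p = (p - 1) + 1 from by omega, Finset.sum_range_succ]
  have hple : (1 : ℚ) < (p : ℚ) := by exact_mod_cast hp.one_lt
  have hne : padicNorm p (∑ i ∈ Finset.range (p - 1), f i) ≠ padicNorm p (f (p - 1)) := by
    rw [hT]; exact ne_of_lt (lt_of_le_of_lt hA hple)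
  have hSnorm : padicNorm p (∑ i ∈ Finset.range p, f i) = p := by
    rw [hsplit, padicNorm.add_eq_max_of_ne hne, hT, max_eq_right (le_trans hA hple.le)]
  -- conclude
  by_contra hd
  have hden : padicNorm p ((∑ i ∈ Finset.range p, f i)) ≤ 1 := by
    set q := ∑ i ∈ Finset.range p, f i with hq
    have hqd : padicNorm p q = padicNorm p (q.num : ℚ) / padicNorm p ((q.den : ℕ) : ℚ) := by
      rw [← padicNorm.div, Rat.num_div_den]
    rw [hqd, padicNorm.nat_eq_one_iff _ |>.mpr hd, div_one]
    exact padicNorm.of_int _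
  rw [hSnorm] at hden
  have : (2 : ℚ) ≤ (p : ℚ) := by exact_mod_cast hp2
  linarith
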